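/- For C = 5 (so k = 2, r = 2, ρ(5) = 8/3), any valid solution satisfies A(5,N) ≥ (23/120)N(N−1) + (N−1)/40. -/

import Mathlib

/-- The load induced on the arc of the directed cycle `C⃗_p` going from `t` to `t+1`
by a set `S` of requests, each request `(i,j)` being routed clockwise from `i` to `j`. -/
def cload (p : ℕ) (S : Finset (ZMod p × ZMod p)) (t : ZMod p) : ℕ :=
  (S.filter fun a => (t - a.1).val < (a.2 - a.1).val).card

/-- The set of vertices (endpoints of arcs) of a digraph given by its arc set. -/
def verts (p : ℕ) (S : Finset (ZMod p × ZMod p)) : Finset (ZMod p) :=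
  S.image Prod.fst ∪ S.image Prod.snd

/-!
Let a part of load at most 5 have `b` arcs on `p` vertices. It contains no arc together with its
reverse, so `2b ≤ p(p-1)`. Charging each arc to the vertices it passes over costs at most `5p` in
total, while for each `k` at most `p` arcs pass over exactly `k` vertices (such an arc is
determined by its tail), so `3b ≤ 8p`. Together these give `b + 3 ≤ 3p`, hence `3A ≥ |T| + 3W`
with `2|T| = N(N-1)`. Summing the loads over all parts bounds the total clockwise length
of the requests, which is at least `N(N²-1)/8`, by `5NW`, whence `40W ≥ N² - 1`.
-/

open Finset

section SwapFree

variable {α : Type*} [DecidableEq α] {S : Finset (α × α)}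

lemma sum_union_image_swap {M : Type*} [AddCommMonoid M] (hS : ∀ a ∈ S, a.swap ∉ S)
    (f : α × α → M) : ∑ a ∈ S ∪ S.image Prod.swap, f a = ∑ a ∈ S, (f a + f a.swap) := by
  have hdisj : Disjoint S (S.image Prod.swap) := by
    rw [disjoint_left]
    rintro a ha hswap
    obtain ⟨b, hb, rfl⟩ := mem_image.1 hswap
    exact hS b hb ha
  rw [sum_union hdisj, sum_image fun x _ y _ h => Prod.swap_injective h, sum_add_distrib]

lemma card_union_image_swap (hS : ∀ a ∈ S, a.swap ∉ S) :
    #(S ∪ S.image Prod.swap) = 2 * #S := by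
  rw [card_eq_sum_ones, sum_union_image_swap hS, sum_const, smul_eq_mul, mul_comm]

lemma two_mul_card_add_card_le_of_swap_notMem {V : Finset α} (hV : ∀ a ∈ S, a.1 ∈ V ∧ a.2 ∈ V)
    (hloop : ∀ a ∈ S, a.1 ≠ a.2) (hS : ∀ a ∈ S, a.swap ∉ S) :
    2 * #S + #V ≤ #V * #V := by
  have hsub : S ∪ S.image Prod.swap ⊆ V.offDiag := by
    intro a ha
    rcases mem_union.1 ha with ha | ha
    · exact mem_offDiag.2 ⟨(hV a ha).1, (hV a ha).2, hloop a ha⟩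
    · obtain ⟨b, hb, rfl⟩ := mem_image.1 ha
      exact mem_offDiag.2 ⟨(hV b hb).2, (hV b hb).1, (hloop b hb).symm⟩
  have := card_le_card hsub
  rw [card_union_image_swap hS, offDiag_card] at this
  have := Nat.le_mul_self #V
  omega

end SwapFree

section Cycle

variable {N : ℕ} [NeZero N]

lemma ZMod.sum_comp_val {M : Type*} [AddCommMonoid M] (f : ℕ → M) :
    ∑ z : ZMod N, f z.val = ∑ k ∈ range N, f k :=
  sum_nbij' ZMod.val (↑) (fun z _ => mem_range.2 (ZMod.val_lt z)) (fun _ _ => mem_univ _)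
    (fun z _ => ZMod.natCast_zmod_val z) (fun _ hk => ZMod.val_cast_of_lt (mem_range.1 hk))
    fun _ _ => rfl

lemma ZMod.val_sub_add_val_sub {i j : ZMod N} (h : i ≠ j) : (j - i).val + (i - j).val = N := by
  rw [← neg_sub j i, ZMod.neg_val, if_neg (sub_ne_zero.2 h.symm)]
  have := ZMod.val_lt (j - i)
  omega

lemma card_filter_val_sub_lt (i : ZMod N) {d : ℕ} (hd : d ≤ N) :
    #{t : ZMod N | (t - i).val < d} = d := by
  rw [card_filter, Fintype.sum_equiv (Equiv.subRight i) (fun t => if (t - i).val < d then 1 else 0)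
    (fun u => if u.val < d then 1 else 0) fun _ => rfl,
    ZMod.sum_comp_val fun k => if k < d then 1 else 0, ← card_filter]
  convert card_range d using 2
  ext k
  simp only [mem_filter, mem_range]
  omega

lemma sum_cload_eq_sum_val_sub (S : Finset (ZMod N × ZMod N)) :
    ∑ t, cload N S t = ∑ a ∈ S, (a.2 - a.1).val := by
  simp only [cload, card_filter]
  rw [sum_comm]
  refine sum_congr rfl fun a _ => ?_
  rw [← card_filter, card_filter_val_sub_lt _ (ZMod.val_lt _).le]

lemma sum_val_sub_le_of_cload_le {S : Finset (ZMod N × ZMod N)} {C : ℕ}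
    (hload : ∀ t, cload N S t ≤ C) : ∑ a ∈ S, (a.2 - a.1).val ≤ C * N := by
  rw [← sum_cload_eq_sum_val_sub]
  calc ∑ t, cload N S t ≤ ∑ _t : ZMod N, C := sum_le_sum fun t _ => hload t
    _ = C * N := by simp [mul_comm]

end Cycle

section Part

variable {N : ℕ}

lemma mem_verts_fst {S : Finset (ZMod N × ZMod N)} {a : ZMod N × ZMod N} (h : a ∈ S) :
    a.1 ∈ verts N S :=
  mem_union_left _ (mem_image_of_mem _ h)

lemma mem_verts_snd {S : Finset (ZMod N × ZMod N)} {a : ZMod N × ZMod N} (h : a ∈ S) :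
    a.2 ∈ verts N S :=
  mem_union_right _ (mem_image_of_mem _ h)

def arcVerts (V : Finset (ZMod N)) (a : ZMod N × ZMod N) : Finset (ZMod N) :=
  V.filter fun v => (v - a.1).val < (a.2 - a.1).val

lemma sum_card_arcVerts (S : Finset (ZMod N × ZMod N)) (V : Finset (ZMod N)) :
    ∑ a ∈ S, #(arcVerts V a) = ∑ v ∈ V, cload N S v := by
  simp only [arcVerts, cload, card_filter]
  exact sum_comm

lemma card_arcVerts_pos {V : Finset (ZMod N)} {a : ZMod N × ZMod N} (ha : a.1 ∈ V)
    (hloop : a.1 ≠ a.2) : 0 < #(arcVerts V a) :=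
  card_pos.2 ⟨a.1, mem_filter.2 ⟨ha, by
    rw [sub_self, ZMod.val_zero, ZMod.val_pos]
    exact sub_ne_zero.2 hloop.symm⟩⟩

lemma card_arcVerts_lt_of_val_lt {V : Finset (ZMod N)} {u z w : ZMod N} (hz : z ∈ V)
    (hzw : (z - u).val < (w - u).val) : #(arcVerts V (u, z)) < #(arcVerts V (u, w)) := by
  have hsub : arcVerts V (u, z) ⊆ arcVerts V (u, w) := by
    intro v hv
    simp only [arcVerts, mem_filter] at hv ⊢
    exact ⟨hv.1, hv.2.trans hzw⟩
  refine card_lt_card ((ssubset_iff_of_subset hsub).2 ⟨z, ?_, ?_⟩)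
  · exact mem_filter.2 ⟨hz, hzw⟩
  · simp [arcVerts]

variable [NeZero N]

lemma card_filter_card_arcVerts_eq_le (S : Finset (ZMod N × ZMod N)) (k : ℕ) :
    #(S.filter fun a => #(arcVerts (verts N S) a) = k) ≤ #(verts N S) := by
  refine card_le_card_of_injOn Prod.fst (fun a ha => mem_verts_fst (mem_filter.1 ha).1) ?_
  rintro ⟨u, z⟩ hz ⟨u', w⟩ hw (rfl : u = u')
  rw [mem_coe, mem_filter] at hz hw
  rcases lt_trichotomy (z - u).val (w - u).val with hlt | heq | hgt
  · exact absurd (hz.2.trans hw.2.symm) (card_arcVerts_lt_of_val_lt (mem_verts_snd hz.1) hlt).ne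
  · rw [sub_left_inj.1 (ZMod.val_injective N heq)]
  · exact absurd (hw.2.trans hz.2.symm) (card_arcVerts_lt_of_val_lt (mem_verts_snd hw.1) hgt).ne

lemma three_mul_card_le_of_cload_le {S : Finset (ZMod N × ZMod N)} {C : ℕ}
    (hloop : ∀ a ∈ S, a.1 ≠ a.2) (hload : ∀ t, cload N S t ≤ C) :
    3 * #S ≤ (C + 3) * #(verts N S) := by
  set V := verts N S
  set c := fun a => #(arcVerts V a)
  have hsum : ∑ a ∈ S, c a ≤ C * #V :=
    calc ∑ a ∈ S, c a = ∑ v ∈ V, cload N S v := sum_card_arcVerts S V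
      _ ≤ ∑ _v ∈ V, C := sum_le_sum fun v _ => hload v
      _ = C * #V := by rw [sum_const, smul_eq_mul, mul_comm]
  have hlevel := card_filter_card_arcVerts_eq_le S
  -- an arc passing over fewer than three vertices is charged to its tail instead
  have hcharge : ∀ a ∈ S,
      3 ≤ c a + 2 * (if c a = 1 then 1 else 0) + (if c a = 2 then 1 else 0) := by
    intro a ha
    have : 0 < c a := card_arcVerts_pos (mem_verts_fst ha) (hloop a ha)
    split_ifs <;> omega
  calc 3 * #S = ∑ _a ∈ S, 3 := by rw [sum_const, smul_eq_mul, mul_comm]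
    _ ≤ ∑ a ∈ S, (c a + 2 * (if c a = 1 then 1 else 0) + (if c a = 2 then 1 else 0)) :=
      sum_le_sum hcharge
    _ = ∑ a ∈ S, c a + 2 * #(S.filter (c · = 1)) + #(S.filter (c · = 2)) := by
      rw [sum_add_distrib, sum_add_distrib, ← mul_sum, card_filter, card_filter]
    _ ≤ C * #V + 2 * #V + #V := by gcongr <;> apply hlevel
    _ = (C + 3) * #V := by ring

lemma add_three_le_three_mul_of_le {p b : ℕ} (hp : 2 ≤ p) (hload : 3 * b ≤ 8 * p)
    (hpairs : 2 * b + p ≤ p * p) : b + 3 ≤ 3 * p := by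
  rcases le_or_gt p 8 with h | h
  · interval_cases p <;> omega
  · omega

lemma card_add_three_le_three_mul_card_verts {S : Finset (ZMod N × ZMod N)} (hS : S.Nonempty)
    (hloop : ∀ a ∈ S, a.1 ≠ a.2) (hswap : ∀ a ∈ S, a.swap ∉ S) (hload : ∀ t, cload N S t ≤ 5) :
    #S + 3 ≤ 3 * #(verts N S) := by
  obtain ⟨a, ha⟩ := hS
  have hp : 2 ≤ #(verts N S) :=
    one_lt_card.2 ⟨a.1, mem_verts_fst ha, a.2, mem_verts_snd ha, hloop a ha⟩
  exact add_three_le_three_mul_of_le hp (three_mul_card_le_of_cload_le hloop hload)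
    (two_mul_card_add_card_le_of_swap_notMem (fun a ha => ⟨mem_verts_fst ha, mem_verts_snd ha⟩)
      hloop hswap)

end Part

lemma sum_range_min_add_two (n : ℕ) :
    ∑ k ∈ range (n + 2), min k (n + 2 - k) = ∑ k ∈ range n, min k (n - k) + n + 1 := by
  rw [sum_range_succ', sum_range_succ]
  have hshift : ∀ k ∈ range n, min (k + 1) (n + 2 - (k + 1)) = min k (n - k) + 1 := by
    intro k hk
    have := mem_range.1 hk
    omega
  rw [sum_congr rfl hshift, sum_add_distrib, sum_const, card_range, smul_eq_mul]
  omega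

lemma mul_self_le_four_mul_sum_range_min_add_one (n : ℕ) :
    n * n ≤ 4 * ∑ k ∈ range n, min k (n - k) + 1 := by
  induction n using Nat.twoStepInduction with
  | zero => simp
  | one => simp
  | more n ih _ =>
    rw [sum_range_min_add_two]
    nlinarith

section Tournament

variable {N : ℕ}

def cycDist (a : ZMod N × ZMod N) : ℕ :=
  min (a.2 - a.1).val (a.1 - a.2).val

lemma cycDist_swap (a : ZMod N × ZMod N) : cycDist a.swap = cycDist a :=
  min_comm _ _

variable [NeZero N]

lemma cycDist_eq_val_sub {a : ZMod N × ZMod N} (hloop : a.1 ≠ a.2)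
    (hshort : 2 * (a.2 - a.1).val ≤ N) : cycDist a = (a.2 - a.1).val := by
  have := ZMod.val_sub_add_val_sub hloop
  unfold cycDist
  omega

lemma sum_cycDist_left (i : ZMod N) :
    ∑ j, cycDist (i, j) = ∑ k ∈ range N, min k (N - k) := by
  rw [Fintype.sum_equiv (Equiv.subRight i) (fun j => cycDist (i, j))
    (fun z => min z.val (N - z.val)), ZMod.sum_comp_val fun k => min k (N - k)]
  intro j
  simp only [cycDist, Equiv.subRight_apply]
  rw [← neg_sub j i, ZMod.neg_val]
  split_ifs with h <;> simp [h]

lemma sum_cycDist_offDiag :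
    ∑ a ∈ (univ : Finset (ZMod N)).offDiag, cycDist a = N * ∑ k ∈ range N, min k (N - k) := by
  rw [sum_subset (subset_univ _) fun a _ ha => ?_, Fintype.sum_prod_type]
  · simp only [sum_cycDist_left, sum_const, card_univ, ZMod.card, smul_eq_mul]
  · have hdiag : a.1 = a.2 := by simpa using ha
    simp [cycDist, hdiag]

variable {T : Finset (ZMod N × ZMod N)}

lemma swap_notMem_of_tournament (hT1 : ∀ a ∈ T, a.1 ≠ a.2 ∧ 2 * (a.2 - a.1).val ≤ N)
    (hT3 : ∀ i j : ZMod N, 2 * (j - i).val = N → ((i, j) ∈ T ↔ (j, i) ∉ T)) :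
    ∀ a ∈ T, a.swap ∉ T := by
  intro a ha hswap
  obtain ⟨hloop, hshort⟩ := hT1 a ha
  have hshort' := (hT1 _ hswap).2
  rw [Prod.snd_swap, Prod.fst_swap] at hshort'
  have := ZMod.val_sub_add_val_sub hloop
  exact (hT3 a.1 a.2 (by omega)).1 ha hswap

lemma offDiag_univ_eq_union_image_swap (hT1 : ∀ a ∈ T, a.1 ≠ a.2 ∧ 2 * (a.2 - a.1).val ≤ N)
    (hT2 : ∀ i j : ZMod N, i ≠ j → 2 * (j - i).val < N → (i, j) ∈ T)
    (hT3 : ∀ i j : ZMod N, 2 * (j - i).val = N → ((i, j) ∈ T ↔ (j, i) ∉ T)) :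
    (univ : Finset (ZMod N)).offDiag = T ∪ T.image Prod.swap := by
  ext ⟨i, j⟩
  simp only [mem_offDiag, mem_univ, true_and, mem_union, mem_image]
  constructor
  · intro hij
    rcases lt_trichotomy (2 * (j - i).val) N with hlt | heq | hgt
    · exact Or.inl (hT2 i j hij hlt)
    · by_cases h : (i, j) ∈ T
      · exact Or.inl h
      · exact Or.inr ⟨(j, i), by_contra fun h' => h ((hT3 i j heq).2 h'), rfl⟩
    · have := ZMod.val_sub_add_val_sub hij
      exact Or.inr ⟨(j, i), hT2 j i hij.symm (by omega), rfl⟩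
  · rintro (h | ⟨⟨j', i'⟩, hb, hswap⟩)
    · exact (hT1 _ h).1
    · obtain ⟨rfl, rfl⟩ := Prod.ext_iff.1 hswap
      exact (hT1 _ hb).1.symm

lemma two_mul_card_add_eq_of_tournament (hT1 : ∀ a ∈ T, a.1 ≠ a.2 ∧ 2 * (a.2 - a.1).val ≤ N)
    (hT2 : ∀ i j : ZMod N, i ≠ j → 2 * (j - i).val < N → (i, j) ∈ T)
    (hT3 : ∀ i j : ZMod N, 2 * (j - i).val = N → ((i, j) ∈ T ↔ (j, i) ∉ T)) :
    2 * #T + N = N * N := by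
  have h := congrArg card (offDiag_univ_eq_union_image_swap hT1 hT2 hT3)
  rw [offDiag_card, card_univ, ZMod.card,
    card_union_image_swap (swap_notMem_of_tournament hT1 hT3)] at h
  have := Nat.le_mul_self N
  omega

lemma mul_mul_self_le_eight_mul_sum_val_sub_add
    (hT1 : ∀ a ∈ T, a.1 ≠ a.2 ∧ 2 * (a.2 - a.1).val ≤ N)
    (hT2 : ∀ i j : ZMod N, i ≠ j → 2 * (j - i).val < N → (i, j) ∈ T)
    (hT3 : ∀ i j : ZMod N, 2 * (j - i).val = N → ((i, j) ∈ T ↔ (j, i) ∉ T)) :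
    N * (N * N) ≤ 8 * ∑ a ∈ T, (a.2 - a.1).val + N := by
  have htwo : 2 * ∑ a ∈ T, (a.2 - a.1).val = N * ∑ k ∈ range N, min k (N - k) := by
    rw [← sum_cycDist_offDiag, offDiag_univ_eq_union_image_swap hT1 hT2 hT3,
      sum_union_image_swap (swap_notMem_of_tournament hT1 hT3), two_mul, ← sum_add_distrib]
    refine sum_congr rfl fun a ha => ?_
    rw [cycDist_swap, cycDist_eq_val_sub (hT1 a ha).1 (hT1 a ha).2]
  have := Nat.mul_le_mul_left N (mul_self_le_four_mul_sum_range_min_add_one N)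
  nlinarith

end Tournament

theorem stmt_19 (N W : ℕ) (hN : 2 ≤ N)
    -- `T` is the tournament of requests: all shortest clockwise arcs, with exactly one
    -- arc chosen per diametrical pair when `N` is even.
    (T : Finset (ZMod N × ZMod N))
    (hT1 : ∀ a ∈ T, a.1 ≠ a.2 ∧ 2 * (a.2 - a.1).val ≤ N)
    (hT2 : ∀ i j : ZMod N, i ≠ j → 2 * (j - i).val < N → (i, j) ∈ T)
    (hT3 : ∀ i j : ZMod N, 2 * (j - i).val = N → ((i, j) ∈ T ↔ (j, i) ∉ T))
    -- a valid partition of the requests into `W` nonempty parts, each of load at most 5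
    (B : Fin W → Finset (ZMod N × ZMod N))
    (hne : ∀ w, (B w).Nonempty)
    (hdisj : ∀ w w', w ≠ w' → Disjoint (B w) (B w'))
    (hcover : ∀ a : ZMod N × ZMod N, a ∈ T ↔ ∃ w, a ∈ B w)
    (hload : ∀ w, ∀ t : ZMod N, cload N (B w) t ≤ 5) :
    ((∑ w : Fin W, (verts N (B w)).card : ℕ) : ℚ)
      ≥ (23 : ℚ) / 120 * (N : ℚ) * ((N : ℚ) - 1) + ((N : ℚ) - 1) / 40 := by
  have : NeZero N := ⟨by omega⟩
  have hT : T = univ.biUnion B := by ext a; simpa using hcover a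
  have hpart : Set.PairwiseDisjoint ↑(univ : Finset (Fin W)) B :=
    fun w _ w' _ h => hdisj w w' h
  have hsub : ∀ w, B w ⊆ T := fun w a ha => (hcover a).2 ⟨w, ha⟩
  have hswap := swap_notMem_of_tournament hT1 hT3
  have hverts : #T + 3 * W ≤ 3 * ∑ w, #(verts N (B w)) :=
    calc #T + 3 * W = ∑ w, (#(B w) + 3) := by
          rw [hT, card_biUnion hpart, sum_add_distrib, sum_const, card_univ, Fintype.card_fin,
            smul_eq_mul, mul_comm]
      _ ≤ ∑ w, 3 * #(verts N (B w)) := sum_le_sum fun w _ =>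
          card_add_three_le_three_mul_card_verts (hne w) (fun a ha => (hT1 a (hsub w ha)).1)
            (fun a ha => hswap a (hsub w ha) ∘ (hsub w ·)) (hload w)
      _ = 3 * ∑ w, #(verts N (B w)) := (mul_sum ..).symm
  have hlen : ∑ a ∈ T, (a.2 - a.1).val ≤ 5 * N * W :=
    calc ∑ a ∈ T, (a.2 - a.1).val = ∑ w, ∑ a ∈ B w, (a.2 - a.1).val := by
          rw [hT, sum_biUnion hpart]
      _ ≤ ∑ _w : Fin W, 5 * N := sum_le_sum fun w _ => sum_val_sub_le_of_cload_le (hload w)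
      _ = 5 * N * W := by rw [sum_const, card_univ, Fintype.card_fin, smul_eq_mul, mul_comm]
  have hW : N * N ≤ 40 * W + 1 := by
    refine Nat.le_of_mul_le_mul_left ?_ (by omega : 0 < N)
    nlinarith [mul_mul_self_le_eight_mul_sum_val_sub_add hT1 hT2 hT3]
  have hcard := two_mul_card_add_eq_of_tournament hT1 hT2 hT3
  have hverts' : (#T : ℚ) + 3 * W ≤ 3 * ((∑ w, #(verts N (B w)) : ℕ) : ℚ) := by
    exact_mod_cast hverts
  have hcard' : 2 * (#T : ℚ) + N = N * N := by exact_mod_cast hcard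
  have hW' : (N : ℚ) * N ≤ 40 * W + 1 := by exact_mod_cast hW
  linarith
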